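/- Let k be a field, let B be a P-algebra over k, and let A be a k-algebra containing B as a graded subalgebra such that A is free as a left B-module. Then Hom_B(k, A) = 0, where k = B/B⁺ is the trivial B-module; equivalently, there is no nonzero element a ∈ A with b·a = 0 for every element b of the augmentation ideal B⁺. -/

import Mathlib

/-!
Poincaré duality of the finite pieces `F n` makes every nonzero homogeneous `x ∈ B^j` detectable
by a positive-degree multiplier: choose `n` with `x ∈ F n` and `pd n > j`, then duality gives
`z ∈ B^(pd n - j)` with `z * x ≠ 0`. Comparing components of degree `pd n` shows that nothing
nonzero in `B` is annihilated by `B⁺`. Freeness transfers this to `A`: writing `a = ∑ f(cᵢ) bᵢ`,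
`f x * a = ∑ f(x cᵢ) bᵢ`, so `B⁺` kills `a` iff it kills every coordinate `cᵢ`.
-/

/-- A connected ℕ-graded algebra `B` over a field `k` (with grading `ℬ`) is a P-algebra with
respect to an increasing chain of graded subalgebras `F n` exhausting `B` and a strictly
increasing dimension function `pd` if each `F n` is a finite-dimensional Poincaré duality
algebra of dimension `pd n` (its grading being induced from that of `B`). -/
structure IsPAlgebra (k : Type*) [Field k] {B : Type*} [Ring B] [Algebra k B]
    (ℬ : ℕ → Submodule k B) [GradedAlgebra ℬ]
    (F : ℕ → Subalgebra k B) (pd : ℕ → ℕ) : Prop where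
  connected : ℬ 0 = (1 : Submodule k B)
  chain : ∀ n, F n ≤ F (n + 1)
  exhaustive : ∀ b : B, ∃ n, b ∈ F n
  graded_subalgebra : ∀ n, (F n).toSubmodule = ⨆ i, ℬ i ⊓ (F n).toSubmodule
  finiteDimensional : ∀ n, FiniteDimensional k (F n)
  pd_lt : ∀ n, pd n < pd (n + 1)
  eq_bot_of_gt : ∀ n, ∀ j, pd n < j → ℬ j ⊓ (F n).toSubmodule = ⊥
  top_rank : ∀ n, Module.finrank k ↥(ℬ (pd n) ⊓ (F n).toSubmodule) = 1
  duality : ∀ n, ∀ j, j ≤ pd n → ∀ x ∈ ℬ j ⊓ (F n).toSubmodule, x ≠ 0 →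
    ∃ z ∈ ℬ (pd n - j) ⊓ (F n).toSubmodule, z * x ≠ 0

open DirectSum

theorem GradedAlgebra.eq_zero_of_forall_mem_iSup_pos_mul_eq_zero {R A : Type*} [CommSemiring R]
    [Semiring A] [Algebra R A] (𝒜 : ℕ → Submodule R A) [GradedAlgebra 𝒜]
    (hdetect : ∀ j, ∀ x ∈ 𝒜 j, x ≠ 0 → ∃ i > 0, ∃ z ∈ 𝒜 i, z * x ≠ 0)
    {c : A} (hc : ∀ x ∈ (⨆ i > 0, 𝒜 i : Submodule R A), x * c = 0) : c = 0 := by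
  classical
  by_contra hc0
  obtain ⟨j, hj⟩ : ∃ j, (decompose 𝒜 c j : A) ≠ 0 := by
    by_contra! h
    exact hc0 (by rw [← sum_support_decompose 𝒜 c]; exact Finset.sum_eq_zero fun j _ => h j)
  obtain ⟨i, hi, z, hz, hzc⟩ := hdetect j _ (decompose 𝒜 c j).2 hj
  have hz_aug : z ∈ (⨆ i > 0, 𝒜 i : Submodule R A) :=
    Submodule.mem_iSup_of_mem i (Submodule.mem_iSup_of_mem hi hz)
  apply hzc
  rw [← coe_decompose_mul_add_of_left_mem 𝒜 hz, hc z hz_aug, decompose_zero, DirectSum.zero_apply,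
    ZeroMemClass.coe_zero]

namespace IsPAlgebra

variable {k B : Type*} [Field k] [Ring B] [Algebra k B] {ℬ : ℕ → Submodule k B}
  [GradedAlgebra ℬ] {F : ℕ → Subalgebra k B} {pd : ℕ → ℕ}

theorem exists_pos_mul_ne_zero (hP : IsPAlgebra k ℬ F pd) {j : ℕ} {x : B} (hx : x ∈ ℬ j)
    (hx0 : x ≠ 0) : ∃ i > 0, ∃ z ∈ ℬ i, z * x ≠ 0 := by
  obtain ⟨n, hn⟩ := hP.exhaustive x
  set m := max n (j + 1)
  have hxm : x ∈ F m := monotone_nat_of_le_succ hP.chain (le_max_left n (j + 1)) hn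
  have hjm : j < pd m :=
    (lt_max_of_lt_right j.lt_succ_self).trans_le (strictMono_nat_of_lt_succ hP.pd_lt).le_apply
  obtain ⟨z, hz, hzx⟩ := hP.duality m j hjm.le x ⟨hx, hxm⟩ hx0
  exact ⟨pd m - j, Nat.sub_pos_of_lt hjm, z, hz.1, hzx⟩

theorem eq_zero_of_forall_mem_iSup_pos_mul_eq_zero (hP : IsPAlgebra k ℬ F pd) {c : B}
    (hc : ∀ x ∈ (⨆ i > 0, ℬ i : Submodule k B), x * c = 0) : c = 0 :=
  GradedAlgebra.eq_zero_of_forall_mem_iSup_pos_mul_eq_zero ℬ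
    (fun _ _ hx hx0 => hP.exists_pos_mul_ne_zero hx hx0) hc

end IsPAlgebra

theorem Finsupp.sum_smul_map_mul {ι B A : Type*} [Semiring B] [Semiring A] (f : B →+* A)
    (b : ι → A) (x : B) (c : ι →₀ B) :
    (x • c).sum (fun i y => f y * b i) = f x * c.sum fun i y => f y * b i := by
  rw [Finsupp.sum_smul_index fun i => by simp only [map_zero, zero_mul], Finsupp.mul_sum]
  exact Finsupp.sum_congr fun i _ => by rw [map_mul, mul_assoc]

theorem eq_zero_of_forall_map_mul_eq_zero_of_bijective {ι B A : Type*} [Semiring B] [Semiring A]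
    {S : Set B} (hB : ∀ c : B, (∀ x ∈ S, x * c = 0) → c = 0) (f : B →+* A) (b : ι → A)
    (hfree : Function.Bijective fun c : ι →₀ B => c.sum fun i y => f y * b i)
    {a : A} (ha : ∀ x ∈ S, f x * a = 0) : a = 0 := by
  obtain ⟨c, rfl⟩ := hfree.2 a
  have hkill : ∀ x ∈ S, x • c = 0 := fun x hx =>
    hfree.1 (by simp only [Finsupp.sum_smul_map_mul, ha x hx, Finsupp.sum_zero_index])
  have hc : c = 0 := Finsupp.ext fun i =>
    hB (c i) fun x hx => by
      rw [← smul_eq_mul, ← Finsupp.smul_apply, hkill x hx, Finsupp.coe_zero, Pi.zero_apply]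
  simp only [hc, Finsupp.sum_zero_index]

theorem statement5_general {k B A : Type*} [Field k] [Ring B] [Algebra k B] [Ring A] [Algebra k A]
    (ℬ : ℕ → Submodule k B) [GradedAlgebra ℬ]
    (FB : ℕ → Subalgebra k B) (pd : ℕ → ℕ)
    (hPB : IsPAlgebra k ℬ FB pd)
    (f : B →ₐ[k] A)
    {ι : Type*} (b : ι → A)
    (hfree : Function.Bijective fun c : ι →₀ B => c.sum fun i x => f x * b i) :
    ∀ a : A, (∀ x ∈ (⨆ j > 0, ℬ j : Submodule k B), f x * a = 0) → a = 0 := fun _ ha =>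
  eq_zero_of_forall_map_mul_eq_zero_of_bijective
    (fun _ hc => hPB.eq_zero_of_forall_mem_iSup_pos_mul_eq_zero hc) (f : B →+* A) b hfree ha

/-- Let `B` be a P-algebra over a field `k` and let `A` be a graded `k`-algebra containing
`B` as a graded subalgebra (via the injective, grading-preserving algebra map `f`), such that
`A` is free as a left `B`-module (witnessed by a basis `b : ι → A`, i.e. the evaluation map
`(ι →₀ B) → A`, `c ↦ ∑ᵢ f(cᵢ) * bᵢ`, is bijective).  Then `Hom_B(k, A) = 0`:  there is no
nonzero `a ∈ A` with `x • a = 0` for every `x` in the augmentation ideal `B⁺ = ⊕_{j>0} B^j`. -/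
theorem statement5 {k B A : Type*} [Field k] [Ring B] [Algebra k B] [Ring A] [Algebra k A]
    (ℬ : ℕ → Submodule k B) [GradedAlgebra ℬ]
    (FB : ℕ → Subalgebra k B) (pd : ℕ → ℕ)
    (hPB : IsPAlgebra k ℬ FB pd)
    (𝒜 : ℕ → Submodule k A) [GradedAlgebra 𝒜]
    (f : B →ₐ[k] A) (hf : Function.Injective f)
    (hgraded : ∀ j, ∀ x ∈ ℬ j, f x ∈ 𝒜 j)
    {ι : Type*} (b : ι → A)
    (hfree : Function.Bijective fun c : ι →₀ B => c.sum fun i x => f x * b i) :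
    ∀ a : A, (∀ x ∈ (⨆ j > 0, ℬ j : Submodule k B), f x * a = 0) → a = 0 :=
  statement5_general ℬ FB pd hPB f b hfree
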